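/- Consider the directed graph gadget on 8 vertices a_y, b_y, c_y, d_y, a_z, b_z, c_z, d_z built as follows. For j ∈ {y, z}: if x_j = 0 add directed edges (a_j, b_j) and (d_j, c_j); if x_j = 1 add (b_j, a_j) and (c_j, d_j). If w = 0 add (b_y, a_z), (b_z, a_y), (d_y, c_z), (d_z, c_y); if w = 1 add (b_y, b_z), (a_z, a_y), (d_y, d_z), (c_z, c_y). Then the resulting directed graph has 8 edges, contains exactly one directed cycle if x_y ⊕ x_z ⊕ w = 0, and contains no directed cycle if x_y ⊕ x_z ⊕ w = 1. Consequently, the maximum acyclic subgraph of the gadget has 7 edges in the first case and 8 edges in the second. -/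

import Mathlib

/-- The directed MAS gadget on the 8 vertices
`a_y = 0, b_y = 1, c_y = 2, d_y = 3, a_z = 4, b_z = 5, c_z = 6, d_z = 7`.
For `j ∈ {y,z}`: if `x_j = 0` add directed edges `(a_j, b_j)` and `(d_j, c_j)`;
if `x_j = 1` add `(b_j, a_j)` and `(c_j, d_j)`. If `w = 0` add
`(b_y, a_z), (b_z, a_y), (d_y, c_z), (d_z, c_y)`; if `w = 1` add
`(b_y, b_z), (a_z, a_y), (d_y, d_z), (c_z, c_y)`. -/
def masGadget (xy xz w : Bool) : Finset (Fin 8 × Fin 8) :=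
  (if xy then {(1, 0), (2, 3)} else ({(0, 1), (3, 2)} : Finset (Fin 8 × Fin 8))) ∪
  (if xz then {(5, 4), (6, 7)} else ({(4, 5), (7, 6)} : Finset (Fin 8 × Fin 8))) ∪
  (if w then {(1, 5), (4, 0), (3, 7), (6, 2)}
   else ({(1, 4), (5, 0), (3, 6), (7, 2)} : Finset (Fin 8 × Fin 8)))

/-- A directed graph (edge set `E`) contains a directed cycle. -/
def HasDicycle (E : Finset (Fin 8 × Fin 8)) : Prop :=
  ∃ v, Relation.TransGen (fun a b => (a, b) ∈ E) v v

/-- `l` is a directed cycle of the directed graph with edge set `E`: a nonempty list of distinct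
vertices each of which has a directed edge to the next (cyclically). -/
def IsDicycleList (E : Finset (Fin 8 × Fin 8)) (l : List (Fin 8)) : Prop :=
  l ≠ [] ∧ l.Nodup ∧ ∀ p ∈ l.zip (l.rotate 1), p ∈ E

/-!
A rank function on the vertices that strictly increases along every edge rules out directed
cycles; this certifies acyclicity of the gadget when `x_y ⊕ x_z ⊕ w = 1`, and of the gadget with
one edge of its 4-cycle removed otherwise, which gives the values 8 and 7 of the maximum acyclic
subgraph. For uniqueness of the cycle `L`, a second rank function decreases along every edge
leaving a vertex outside `L`, and such edges never enter `L`; hence a directed cycle cannot visit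
a vertex outside `L`, and the finitely many cyclic orders of subsets of `L` are checked directly.
-/

instance (E : Finset (Fin 8 × Fin 8)) : DecidablePred (IsDicycleList E) := fun l =>
  inferInstanceAs (Decidable (l ≠ [] ∧ l.Nodup ∧ ∀ p ∈ l.zip (l.rotate 1), p ∈ E))

theorem Relation.TransGen.lt_of_rank {α : Type*} {r : α → α → Prop} (g : α → ℕ)
    (hg : ∀ a b, r a b → g a < g b) {a b : α} (hab : Relation.TransGen r a b) : g a < g b := by
  have := hab.lift g hg
  rwa [Relation.transGen_eq_self] at this

theorem not_hasDicycle_of_rank {E : Finset (Fin 8 × Fin 8)} (g : Fin 8 → ℕ)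
    (hg : ∀ a b, (a, b) ∈ E → g a < g b) : ¬ HasDicycle E :=
  fun ⟨_, hv⟩ => (hv.lt_of_rank g hg).false

theorem List.exists_mem_zip_rotate_one {α : Type*} {l : List α} {a : α} (ha : a ∈ l) :
    ∃ b ∈ l, (a, b) ∈ l.zip (l.rotate 1) := by
  obtain ⟨i, hi, rfl⟩ := List.mem_iff_getElem.mp ha
  have hir : i < (l.rotate 1).length := by simpa using hi
  have hiz : i < (l.zip (l.rotate 1)).length := by simpa using hi
  refine ⟨(l.rotate 1)[i], List.mem_rotate.mp (List.getElem_mem hir), ?_⟩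
  simpa using List.getElem_mem hiz

theorem Relation.transGen_of_forall_mem_zip {α : Type*} {r : α → α → Prop} (u v : α)
    (t : List α) (h : ∀ p ∈ (u :: t).zip (t ++ [v]), r p.1 p.2) : Relation.TransGen r u v := by
  induction t generalizing u with
  | nil => exact .single (h (u, v) (by simp))
  | cons x t ih =>
    exact .head (h (u, x) (by simp)) (ih x fun p hp => h p (by simp [hp]))

theorem IsDicycleList.hasDicycle {E : Finset (Fin 8 × Fin 8)} {l : List (Fin 8)}
    (hl : IsDicycleList E l) : HasDicycle E := by
  obtain ⟨hne, -, hzip⟩ := hl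
  obtain ⟨v, t, rfl⟩ := List.exists_cons_of_ne_nil hne
  exact ⟨v, Relation.transGen_of_forall_mem_zip v v t (by simpa using hzip)⟩

theorem mem_of_forall_exists_succ {α : Type*} {r : α → α → Prop} {P : α → Prop}
    {S : Set α} (g : α → ℕ) (hout : ∀ a b, r a b → a ∉ S → b ∉ S ∧ g b < g a)
    (hsucc : ∀ a, P a → ∃ b, P b ∧ r a b) (a : α) (ha : P a) : a ∈ S := by
  induction a using (measure g).wf.induction with
  | h a ih =>
    by_contra haS
    obtain ⟨b, hb, hab⟩ := hsucc a ha
    obtain ⟨hbS, hba⟩ := hout a b hab haS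
    exact hbS (ih b hba hb)

-- `permutations'` is structurally recursive, unlike `permutations`, so `hcheck` can be decided.
theorem IsDicycleList.isRotated_of_rank {E : Finset (Fin 8 × Fin 8)} {L : List (Fin 8)}
    (g : Fin 8 → ℕ) (hout : ∀ a b, (a, b) ∈ E → a ∉ L → b ∉ L ∧ g b < g a)
    (hcheck : ∀ l ∈ L.sublists.flatMap List.permutations', IsDicycleList E l → l.IsRotated L)
    {l : List (Fin 8)} (hl : IsDicycleList E l) : l.IsRotated L := by
  have hsub : l ⊆ L := fun a ha =>
    mem_of_forall_exists_succ (P := (· ∈ l)) (S := {a | a ∈ L}) g hout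
      (fun _ hb => (List.exists_mem_zip_rotate_one hb).imp fun _ hc => ⟨hc.1, hl.2.2 _ hc.2⟩)
      a ha
  obtain ⟨l', hperm, hsubl⟩ := List.subperm_of_subset hl.2.1 hsub
  refine hcheck l (List.mem_flatMap.mpr ⟨l', ?_, ?_⟩) hl
  · exact List.mem_sublists.mpr hsubl
  · exact List.mem_permutations'.mpr hperm.symm

theorem isGreatest_card_of_not_hasDicycle {E : Finset (Fin 8 × Fin 8)} (hE : ¬ HasDicycle E) :
    IsGreatest {k | ∃ F ⊆ E, ¬ HasDicycle F ∧ F.card = k} E.card :=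
  ⟨⟨E, subset_rfl, hE, rfl⟩, fun _ ⟨_, hF, _, hk⟩ => hk ▸ Finset.card_le_card hF⟩

theorem isGreatest_card_sub_one_of_erase {E : Finset (Fin 8 × Fin 8)} {e : Fin 8 × Fin 8}
    (he : e ∈ E) (hE : HasDicycle E) (hEe : ¬ HasDicycle (E.erase e)) :
    IsGreatest {k | ∃ F ⊆ E, ¬ HasDicycle F ∧ F.card = k} (E.card - 1) := by
  refine ⟨⟨E.erase e, Finset.erase_subset e E, hEe, Finset.card_erase_of_mem he⟩, ?_⟩
  rintro _ ⟨F, hF, hFacyc, rfl⟩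
  have hFE : F ≠ E := by rintro rfl; exact hFacyc hE
  have := Finset.card_lt_card (Finset.ssubset_iff_subset_ne.mpr ⟨hF, hFE⟩)
  omega

theorem masGadget_card (xy xz w : Bool) : (masGadget xy xz w).card = 8 := by
  revert xy xz w; decide

theorem not_hasDicycle_masGadget {xy xz w : Bool} (h : xor xy (xor xz w) = true) :
    ¬ HasDicycle (masGadget xy xz w) := by
  cases xy <;> cases xz <;> cases w <;> cases h
  exacts [not_hasDicycle_of_rank ![1, 2, 3, 0, 0, 3, 2, 1] (by decide),
    not_hasDicycle_of_rank ![1, 2, 3, 0, 3, 0, 1, 2] (by decide),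
    not_hasDicycle_of_rank ![3, 0, 1, 2, 1, 2, 3, 0] (by decide),
    not_hasDicycle_of_rank ![3, 0, 1, 2, 2, 1, 0, 3] (by decide)]

theorem exists_isDicycleList_masGadget_forall_isRotated {xy xz w : Bool}
    (h : xor xy (xor xz w) = false) :
    ∃ l, IsDicycleList (masGadget xy xz w) l ∧
      ∀ l', IsDicycleList (masGadget xy xz w) l' → l'.IsRotated l := by
  cases xy <;> cases xz <;> cases w <;> cases h
  exacts [⟨[0, 1, 4, 5], by decide,
      fun _ hl => hl.isRotated_of_rank ![0, 0, 0, 1, 0, 0, 0, 1] (by decide) (by decide +kernel)⟩,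
    ⟨[0, 1, 5, 4], by decide,
      fun _ hl => hl.isRotated_of_rank ![0, 0, 0, 1, 0, 0, 1, 0] (by decide) (by decide +kernel)⟩,
    ⟨[2, 3, 7, 6], by decide,
      fun _ hl => hl.isRotated_of_rank ![0, 1, 0, 0, 1, 0, 0, 0] (by decide) (by decide +kernel)⟩,
    ⟨[2, 3, 6, 7], by decide,
      fun _ hl => hl.isRotated_of_rank ![0, 1, 0, 0, 0, 1, 0, 0] (by decide) (by decide +kernel)⟩]

theorem exists_mem_masGadget_not_hasDicycle_erase {xy xz w : Bool}
    (h : xor xy (xor xz w) = false) :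
    ∃ e ∈ masGadget xy xz w, ¬ HasDicycle ((masGadget xy xz w).erase e) := by
  cases xy <;> cases xz <;> cases w <;> cases h
  exacts [⟨(5, 0), by decide, not_hasDicycle_of_rank ![0, 1, 1, 0, 2, 3, 1, 0] (by decide)⟩,
    ⟨(4, 0), by decide, not_hasDicycle_of_rank ![0, 1, 1, 0, 3, 2, 0, 1] (by decide)⟩,
    ⟨(6, 2), by decide, not_hasDicycle_of_rank ![1, 0, 0, 1, 0, 1, 3, 2] (by decide)⟩,
    ⟨(7, 2), by decide, not_hasDicycle_of_rank ![1, 0, 0, 1, 1, 0, 2, 3] (by decide)⟩]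

/-- The MAS gadget has 8 edges; if `x_y ⊕ x_z ⊕ w = 0` it contains exactly one directed cycle
(up to rotation) and its maximum acyclic subgraph has exactly 7 edges; if `x_y ⊕ x_z ⊕ w = 1`
it contains no directed cycle and its maximum acyclic subgraph has all 8 edges. -/
theorem stmt_14 (xy xz w : Bool) :
    (masGadget xy xz w).card = 8 ∧
    (xor xy (xor xz w) = false →
      (∃ l, IsDicycleList (masGadget xy xz w) l ∧
        ∀ l', IsDicycleList (masGadget xy xz w) l' → l'.IsRotated l) ∧
      IsGreatest {k | ∃ F ⊆ masGadget xy xz w, ¬ HasDicycle F ∧ F.card = k} 7) ∧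
    (xor xy (xor xz w) = true →
      ¬ HasDicycle (masGadget xy xz w) ∧
      IsGreatest {k | ∃ F ⊆ masGadget xy xz w, ¬ HasDicycle F ∧ F.card = k} 8) := by
  have hcard := masGadget_card xy xz w
  refine ⟨hcard, fun h => ?_, fun h => ?_⟩
  · obtain ⟨l, hl, huniq⟩ := exists_isDicycleList_masGadget_forall_isRotated h
    obtain ⟨e, he, hacyc⟩ := exists_mem_masGadget_not_hasDicycle_erase h
    refine ⟨⟨l, hl, huniq⟩, ?_⟩
    simpa [hcard] using isGreatest_card_sub_one_of_erase he hl.hasDicycle hacyc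
  · have hacyc := not_hasDicycle_masGadget h
    exact ⟨hacyc, by simpa [hcard] using isGreatest_card_of_not_hasDicycle hacyc⟩
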